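/- In a Bayesian network whose DAG is a polytree with n binary nodes, each node having at most k parents, exact computation of any conditional probability P(X = x | E) for evidence E can be done in time polynomial in n (for fixed k). -/

import Mathlib

/-- A Bayesian network over `n` binary nodes. `parents i` is the parent set of node `i`
(nodes are topologically ordered), and `cpt i a` is the conditional probability that node `i`
is `true` given the values that the assignment `a` gives to its parents. -/
structure BayesNet (n : ℕ) where
  parents : Fin n → Finset (Fin n)
  cpt : Fin n → (Fin n → Bool) → ℝ
  parents_lt : ∀ i j, j ∈ parents i → j < i
  cpt_nonneg : ∀ i a, 0 ≤ cpt i a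
  cpt_le_one : ∀ i a, cpt i a ≤ 1
  cpt_local : ∀ i a b, (∀ j ∈ parents i, a j = b j) → cpt i a = cpt i b

namespace BayesNet

/-- Joint probability of a complete assignment. -/
noncomputable def joint {n : ℕ} (B : BayesNet n) (a : Fin n → Bool) : ℝ :=
  ∏ i, if a i then B.cpt i a else 1 - B.cpt i a

/-- The underlying undirected graph of the network. -/
def uadj {n : ℕ} (B : BayesNet n) : SimpleGraph (Fin n) :=
  SimpleGraph.fromRel (fun i j => j ∈ B.parents i)

/-- A polytree is a DAG whose underlying undirected graph is acyclic (a forest). -/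
def IsPolytree {n : ℕ} (B : BayesNet n) : Prop := B.uadj.IsAcyclic

/-- An assignment is consistent with partial evidence `e` if it agrees with `e` wherever
`e` is specified. -/
def Consistent {n : ℕ} (e : Fin n → Option Bool) (a : Fin n → Bool) : Prop :=
  ∀ i, ∀ b ∈ e i, a i = b

open Classical in
/-- The conditional probability `P(X = x | E)` for evidence `E` (as a ratio of sums of joint
probabilities; it is `0` by convention when the evidence has probability `0`). -/
noncomputable def condProb {n : ℕ} (B : BayesNet n) (X : Fin n) (x : Bool)
    (e : Fin n → Option Bool) : ℝ :=
  (∑ a : Fin n → Bool, if Consistent e a ∧ a X = x then B.joint a else 0) /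
    (∑ a : Fin n → Bool, if Consistent e a then B.joint a else 0)

end BayesNet

/-- A step of a straight-line arithmetic program with inputs indexed by `ι`: it may read an
input, use the constants `0` and `1`, or combine two previously computed values (referred to by
their positions) by `+`, `-`, `*`, or `/`. -/
inductive SLPOp (ι : Type*) where
  | input (x : ι)
  | zero
  | one
  | add (i j : ℕ)
  | sub (i j : ℕ)
  | mul (i j : ℕ)
  | div (i j : ℕ)

/-- Run a straight-line program (the last instruction comes first); produces the list of all
computed values, most recent first. -/
noncomputable def runSLP {ι : Type*} (f : ι → ℝ) : List (SLPOp ι) → List ℝ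
  | [] => []
  | o :: rest =>
    let prev := runSLP f rest
    (match o with
      | .input x => f x
      | .zero => 0
      | .one => 1
      | .add i j => prev.getD i 0 + prev.getD j 0
      | .sub i j => prev.getD i 0 - prev.getD j 0
      | .mul i j => prev.getD i 0 * prev.getD j 0
      | .div i j => prev.getD i 0 / prev.getD j 0) :: prev

namespace PolyInfer
variable {ι : Type*}

noncomputable def evalOp (f : ι → ℝ) (o : SLPOp ι) (prev : List ℝ) : ℝ :=
  match o with
  | .input x => f x
  | .zero => 0
  | .one => 1
  | .add i j => prev.getD i 0 + prev.getD j 0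
  | .sub i j => prev.getD i 0 - prev.getD j 0
  | .mul i j => prev.getD i 0 * prev.getD j 0
  | .div i j => prev.getD i 0 / prev.getD j 0

noncomputable def runOn (f : ι → ℝ) : List (SLPOp ι) → List ℝ → List ℝ
  | [], acc => acc
  | o :: rest, acc => evalOp f o (runOn f rest acc) :: runOn f rest acc

@[simp] lemma runOn_nil (f : ι → ℝ) (acc : List ℝ) : runOn f [] acc = acc := rfl

@[simp] lemma runOn_cons (f : ι → ℝ) (o : SLPOp ι) (rest : List (SLPOp ι)) (acc : List ℝ) :
    runOn f (o :: rest) acc = evalOp f o (runOn f rest acc) :: runOn f rest acc := rfl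

lemma runSLP_eq_runOn (f : ι → ℝ) (p : List (SLPOp ι)) : runSLP f p = runOn f p [] := by
  induction p with
  | nil => rfl
  | cons o rest ih =>
    rw [runSLP.eq_def, runOn_cons, ← ih]
    cases o <;> rfl

lemma runOn_append (f : ι → ℝ) (p q : List (SLPOp ι)) (acc : List ℝ) :
    runOn f (p ++ q) acc = runOn f p (runOn f q acc) := by
  induction p with
  | nil => rfl
  | cons o rest ih => simp [runOn_cons, ih]

lemma runSLP_append (f : ι → ℝ) (p q : List (SLPOp ι)) :
    runSLP f (p ++ q) = runOn f p (runSLP f q) := by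
  rw [runSLP_eq_runOn, runSLP_eq_runOn, ← runOn_append]

/-- Table-builder lemma: stack a list of 3-op blocks, each computing a prescribed value. -/
lemma buildTable (f : ι → ℝ) (acc₀ : List ℝ)
    (l : List ((ℕ → List (SLPOp ι)) × ℝ))
    (h : ∀ p ∈ l, ∀ (off : ℕ) (W : List ℝ), W.length = off →
      (p.1 off).length = 3 ∧
      ∃ w₁ w₂, runOn f (p.1 off) (W ++ acc₀) = p.2 :: w₂ :: w₁ :: (W ++ acc₀)) :
    ∃ Q W, Q.length = 3 * l.length ∧ W.length = 3 * l.length ∧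
      runOn f Q acc₀ = W ++ acc₀ ∧
      ∀ j (hj : j < l.length), W.getD (3 * j) 0 = (l.get ⟨j, hj⟩).2 := by
  induction l with
  | nil => exact ⟨[], [], rfl, rfl, rfl, fun j hj => absurd hj (Nat.not_lt_zero j)⟩
  | cons p rest ih =>
    obtain ⟨Qr, Wr, hQr, hWr, hrun, hval⟩ := ih (fun q hq => h q (List.mem_cons_of_mem _ hq))
    obtain ⟨hlen3, w₁, w₂, hrun3⟩ := h p List.mem_cons_self (3 * rest.length) Wr hWr
    refine ⟨p.1 (3 * rest.length) ++ Qr, p.2 :: w₂ :: w₁ :: Wr, ?_, ?_, ?_, ?_⟩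
    · simp only [List.length_append, hlen3, hQr, List.length_cons]; ring
    · simp only [List.length_cons, hWr]; ring
    · rw [runOn_append, hrun, hrun3]; rfl
    · intro j hj
      match j with
      | 0 => rfl
      | Nat.succ j' =>
        have hj' : j' < rest.length := by simpa using hj
        have : 3 * (j' + 1) = (3 * j') + 1 + 1 + 1 := by ring
        rw [this]
        simpa using hval j' hj'

variable {n : ℕ}

/-- Normalized partition-function-like sum. -/
noncomputable def Zn (S : Finset (Fin n)) (φ : Fin n → (Fin n → Bool) → ℝ) : ℝ :=
  (∑ a : Fin n → Bool, ∏ i ∈ S, φ i a) / 2 ^ (n - S.card)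

noncomputable abbrev inv (u : Fin n) (b : Bool) (h : {j : Fin n // j ≠ u} → Bool) :
    Fin n → Bool :=
  (Equiv.funSplitAt u Bool).symm (b, h)

@[simp] lemma inv_apply_self (u : Fin n) (b : Bool) (h : {j : Fin n // j ≠ u} → Bool) :
    inv u b h u = b := by simp [inv]

lemma update_inv (u : Fin n) (b c : Bool) (h : {j : Fin n // j ≠ u} → Bool) :
    Function.update (inv u b h) u c = inv u c h := by
  funext j
  rcases eq_or_ne j u with rfl | hj
  · simp [inv]
  · simp [inv, Function.update_of_ne hj, hj]

lemma sum_split (u : Fin n) (F : (Fin n → Bool) → ℝ) :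
    ∑ a : Fin n → Bool, F a
      = ∑ h : {j : Fin n // j ≠ u} → Bool, (F (inv u true h) + F (inv u false h)) := by
  rw [← Equiv.sum_comp (Equiv.funSplitAt u Bool).symm F, Fintype.sum_prod_type,
    Fintype.sum_bool, ← Finset.sum_add_distrib]

lemma Zn_empty (φ : Fin n → (Fin n → Bool) → ℝ) : Zn (∅ : Finset (Fin n)) φ = 1 := by
  have h2 : (0:ℝ) < 2 ^ n := by positivity
  simp [Zn, Finset.sum_const, Fintype.card_fun, div_self (ne_of_gt h2)]

lemma card_le_n (S : Finset (Fin n)) : S.card ≤ n := by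
  simpa using Finset.card_le_univ S

/-- Eliminating a leaf `u` of the live graph whose unique live neighbour is `t`. -/
lemma elim_leaf (S : Finset (Fin n)) (u t : Fin n) (hu : u ∈ S) (ht : t ∈ S) (hut : u ≠ t)
    (φ : Fin n → (Fin n → Bool) → ℝ)
    (Hi : ∀ i ∈ S, i ≠ u → i ≠ t →
      ∀ (a : Fin n → Bool) (c : Bool), φ i (Function.update a u c) = φ i a) :
    Zn S φ = Zn (S.erase u) (Function.update φ t (fun a =>
      φ u (Function.update a u true) * φ t (Function.update a u true) +
      φ u (Function.update a u false) * φ t (Function.update a u false))) := by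
  classical
  set ψ : (Fin n → Bool) → ℝ := fun a =>
      φ u (Function.update a u true) * φ t (Function.update a u true) +
      φ u (Function.update a u false) * φ t (Function.update a u false) with hψdef
  set S'' : Finset (Fin n) := (S.erase u).erase t with hS''
  set Pr : (Fin n → Bool) → ℝ := fun a => ∏ i ∈ S'', φ i a with hPrdef
  have ht' : t ∈ S.erase u := Finset.mem_erase.2 ⟨hut.symm, ht⟩
  have hPrupd : ∀ (a : Fin n → Bool) (c : Bool), Pr (Function.update a u c) = Pr a := by
    intro a c
    refine Finset.prod_congr rfl (fun i hi => ?_)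
    have hit : i ≠ t := (Finset.mem_erase.1 hi).1
    have hiu : i ≠ u := (Finset.mem_erase.1 (Finset.mem_erase.1 hi).2).1
    have hiS : i ∈ S := (Finset.mem_erase.1 (Finset.mem_erase.1 hi).2).2
    exact Hi i hiS hiu hit a c
  have hL : ∀ a : Fin n → Bool, (∏ i ∈ S, φ i a) = φ u a * (φ t a * Pr a) := by
    intro a
    rw [← Finset.mul_prod_erase S _ hu, ← Finset.mul_prod_erase (S.erase u) _ ht']
  have hR : ∀ a : Fin n → Bool,
      (∏ i ∈ S.erase u, (Function.update φ t ψ) i a) = ψ a * Pr a := by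
    intro a
    rw [← Finset.mul_prod_erase (S.erase u) _ ht']
    simp only [Function.update_self]
    congr 1
    refine Finset.prod_congr rfl (fun i hi => ?_)
    rw [Function.update_of_ne (Finset.mem_erase.1 hi).1]
  -- key sum identity
  have key : (∑ a : Fin n → Bool, ψ a * Pr a)
      = 2 * ∑ a : Fin n → Bool, φ u a * (φ t a * Pr a) := by
    rw [sum_split u (fun a => ψ a * Pr a), sum_split u (fun a => φ u a * (φ t a * Pr a)),
      Finset.mul_sum]
    refine Finset.sum_congr rfl (fun h _ => ?_)
    have e1 : Function.update (inv u true h) u true = inv u true h := update_inv u true true h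
    have e2 : Function.update (inv u true h) u false = inv u false h := update_inv u true false h
    have e3 : Function.update (inv u false h) u true = inv u true h := update_inv u false true h
    have e4 : Function.update (inv u false h) u false = inv u false h := update_inv u false false h
    have ePr : Pr (inv u true h) = Pr (inv u false h) := by
      rw [← e3, hPrupd]
    simp only [hψdef, e1, e2, e3, e4, ePr]
    ring
  -- assemble
  have hM1 : 1 ≤ S.card := Finset.card_pos.2 ⟨u, hu⟩
  have hMn : S.card ≤ n := card_le_n S
  have hcard : (S.erase u).card = S.card - 1 := Finset.card_erase_of_mem hu
  rw [Zn, Zn]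
  rw [Finset.sum_congr rfl (fun a _ => hL a), Finset.sum_congr rfl (fun a _ => hR a), key,
    hcard]
  have hexp : n - (S.card - 1) = (n - S.card) + 1 := by omega
  rw [hexp, pow_succ]
  field_simp

/-- Eliminating an isolated live vertex `u`. -/
lemma elim_isolated (S : Finset (Fin n)) (u : Fin n) (hu : u ∈ S)
    (φ : Fin n → (Fin n → Bool) → ℝ)
    (Hu : ∀ a b : Fin n → Bool, a u = b u → φ u a = φ u b)
    (Hi : ∀ i ∈ S, i ≠ u →
      ∀ (a : Fin n → Bool) (c : Bool), φ i (Function.update a u c) = φ i a) :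
    Zn S φ = (φ u (Function.update (fun _ => false) u true) + φ u (fun _ => false))
      * Zn (S.erase u) φ := by
  classical
  set Pr : (Fin n → Bool) → ℝ := fun a => ∏ i ∈ S.erase u, φ i a with hPrdef
  have hPrupd : ∀ (a : Fin n → Bool) (c : Bool), Pr (Function.update a u c) = Pr a := by
    intro a c
    refine Finset.prod_congr rfl (fun i hi => ?_)
    exact Hi i (Finset.mem_erase.1 hi).2 (Finset.mem_erase.1 hi).1 a c
  have hL : ∀ a : Fin n → Bool, (∏ i ∈ S, φ i a) = φ u a * Pr a := by
    intro a
    rw [← Finset.mul_prod_erase S _ hu]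
  have hval : ∀ (b : Bool) (h : {j : Fin n // j ≠ u} → Bool),
      φ u (inv u b h) = φ u (Function.update (fun _ => false) u b) :=
    fun b h => Hu _ _ (by simp)
  have key : 2 * (∑ a : Fin n → Bool, φ u a * Pr a)
      = (φ u (Function.update (fun _ => false) u true) + φ u (fun _ => false))
        * ∑ a : Fin n → Bool, Pr a := by
    rw [sum_split u (fun a => φ u a * Pr a), sum_split u Pr, Finset.mul_sum, Finset.mul_sum]
    refine Finset.sum_congr rfl (fun h _ => ?_)
    have ePr : Pr (inv u true h) = Pr (inv u false h) := by
      rw [← update_inv u false true h, hPrupd]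
    have hvF : φ u (inv u false h) = φ u (fun _ => false) := Hu _ _ (by simp)
    rw [hval true h, hvF, ePr]
    ring
  have key' : (∑ a : Fin n → Bool, φ u a * Pr a)
      = (φ u (Function.update (fun _ => false) u true) + φ u (fun _ => false))
        * (∑ a : Fin n → Bool, Pr a) / 2 := by linarith [key]
  have hM1 : 1 ≤ S.card := Finset.card_pos.2 ⟨u, hu⟩
  have hMn : S.card ≤ n := card_le_n S
  have hcard : (S.erase u).card = S.card - 1 := Finset.card_erase_of_mem hu
  rw [Zn, Zn, Finset.sum_congr rfl (fun a _ => hL a), key', hcard]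
  have hexp : n - (S.card - 1) = (n - S.card) + 1 := by omega
  rw [hexp, pow_succ]
  field_simp
  rfl

open SimpleGraph

lemma start_edge_unique {V : Type*} {G : SimpleGraph V} {u v : V} (p : G.Walk u v)
    (hp : p.IsPath) : ∀ w₁ w₂, s(u, w₁) ∈ p.edges → s(u, w₂) ∈ p.edges → w₁ = w₂ := by
  induction p with
  | nil => intro w₁ w₂ h1; simp at h1
  | @cons a b c h q ih =>
    rw [SimpleGraph.Walk.cons_isPath_iff] at hp
    intro w₁ w₂ h1 h2
    have key : ∀ w, s(a, w) ∈ (SimpleGraph.Walk.cons h q).edges → w = b := by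
      intro w hw
      rw [SimpleGraph.Walk.edges_cons, List.mem_cons] at hw
      rcases hw with hw | hw
      · rw [Sym2.eq_iff] at hw
        rcases hw with ⟨-, rfl⟩ | ⟨rfl, rfl⟩
        · rfl
        · exact absurd (G.ne_of_adj h) (by simp)
      · exact absurd (q.fst_mem_support_of_mem_edges hw) hp.2
    rw [key w₁ h1, key w₂ h2]

lemma exists_leaf {n : ℕ} (G : SimpleGraph (Fin n)) (hG : G.IsAcyclic)
    (S : Finset (Fin n)) (hS : S.Nonempty) :
    ∃ u ∈ S, ∀ w₁ ∈ S, ∀ w₂ ∈ S, G.Adj u w₁ → G.Adj u w₂ → w₁ = w₂ := by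
  classical
  obtain ⟨v₀, hv₀⟩ := hS
  set P : ℕ → Prop := fun L => ∃ (x y : Fin n) (p : G.Walk x y), p.IsPath ∧
    (∀ w ∈ p.support, w ∈ S) ∧ p.length = L with hPdef
  have hP0 : P 0 := ⟨v₀, v₀, SimpleGraph.Walk.nil, by simp, by simpa using hv₀, rfl⟩
  set L := Nat.findGreatest P n with hL
  have hPL : P L := Nat.findGreatest_spec (Nat.zero_le n) hP0
  obtain ⟨x, y, p, hp, hsupp, hlen⟩ := hPL
  refine ⟨x, hsupp x p.start_mem_support, ?_⟩
  have hmem : ∀ w ∈ S, G.Adj x w → w ∈ p.support := by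
    intro w hwS hadj
    by_contra hws
    have hp' : (SimpleGraph.Walk.cons (G.adj_symm hadj) p).IsPath :=
      (SimpleGraph.Walk.cons_isPath_iff _ _).2 ⟨hp, hws⟩
    have hlt : L + 1 < n := by
      have := hp'.length_lt
      simpa [hlen] using this
    exact Nat.findGreatest_is_greatest (P := P) (by omega) (Nat.le_of_lt hlt)
      ⟨w, y, _, hp', by intro z hz; rcases (by simpa using hz) with rfl | hz'
                        exacts [hwS, hsupp z hz'], by simp [hlen]⟩
  have hedge : ∀ w ∈ S, G.Adj x w → s(x, w) ∈ p.edges := by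
    intro w hwS hadj
    by_contra hne
    have hwsup : w ∈ p.support := hmem w hwS hadj
    have hq : (p.takeUntil w hwsup).IsPath := hp.takeUntil hwsup
    have hqe : s(w, x) ∉ (p.takeUntil w hwsup).edges := by
      rw [Sym2.eq_swap]
      exact fun hc => hne (SimpleGraph.Walk.edges_takeUntil_subset _ _ hc)
    exact hG _ (SimpleGraph.Path.cons_isCycle ⟨_, hq⟩ (G.adj_symm hadj) hqe)
  intro w₁ hw₁ w₂ hw₂ ha₁ ha₂
  exact start_edge_unique p hp w₁ w₂ (hedge w₁ hw₁ ha₁) (hedge w₂ hw₂ ha₂)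


section Elim

variable {n k : ℕ} {ι : Type*}

/-- Mask an assignment to a finite set of coordinates. -/
noncomputable def mask (T : Finset (Fin n)) (a : Fin n → Bool) : Fin n → Bool :=
  fun j => if j ∈ T then a j else false

open Classical in
/-- Canonical assignments supported on `T`. -/
noncomputable def asgn (T : Finset (Fin n)) : Finset (Fin n → Bool) :=
  Finset.univ.filter (fun a => ∀ j, j ∉ T → a j = false)

lemma mask_mem_asgn (T : Finset (Fin n)) (a : Fin n → Bool) : mask T a ∈ asgn T := by
  classical
  simp only [asgn, Finset.mem_filter, Finset.mem_univ, true_and]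
  intro j hj
  simp [mask, hj]

lemma mask_agree (T : Finset (Fin n)) (a : Fin n → Bool) : ∀ j ∈ T, mask T a j = a j := by
  intro j hj; simp [mask, hj]

lemma card_asgn_le (T : Finset (Fin n)) {m : ℕ} (h : T.card ≤ m) :
    (asgn T).card ≤ 2 ^ m := by
  classical
  have : (asgn T).card ≤ (Finset.univ : Finset (↥T → Bool)).card := by
    refine Finset.card_le_card_of_injOn (fun a (j : ↥T) => a j.1)
      (fun a _ => Finset.mem_univ _) ?_
    intro a ha b hb hab
    simp only [asgn, Finset.mem_coe, Finset.mem_filter] at ha hb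
    funext j
    by_cases hj : j ∈ T
    · exact congrFun hab ⟨j, hj⟩
    · rw [ha.2 j hj, hb.2 j hj]
  calc (asgn T).card ≤ (Finset.univ : Finset (↥T → Bool)).card := this
    _ = 2 ^ T.card := by simp [Finset.card_univ, Fintype.card_fun]
    _ ≤ 2 ^ m := Nat.pow_le_pow_right (by norm_num) h

lemma getD_shift (W acc : List ℝ) (p off : ℕ) (h : W.length = off) :
    (W ++ acc).getD (p + off) 0 = acc.getD p 0 := by
  rw [List.getD_append_right _ _ _ _ (by omega), h, Nat.add_sub_cancel]

/-- The main elimination induction: a straight-line program computing `Zn S φ`. -/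
lemma main_elim (f : ι → ℝ) (G : SimpleGraph (Fin n)) (hG : G.IsAcyclic) :
    ∀ (m : ℕ) (S : Finset (Fin n)), S.card = m →
      ∀ (φ : Fin n → (Fin n → Bool) → ℝ) (T : Fin n → Finset (Fin n))
        (pos : Fin n → (Fin n → Bool) → ℕ) (acc₀ : List ℝ),
      (∀ i ∈ S, ∀ a b, (∀ j ∈ T i, a j = b j) → φ i a = φ i b) →
      (∀ i ∈ S, ∀ j ∈ T i, j = i ∨ (j ∈ S ∧ G.Adj i j)) →
      (∀ i ∈ S, (T i).card ≤ k + 1) →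
      (∀ i ∈ S, i ∈ T i) →
      (∀ i ∈ S, ∀ a, acc₀.getD (pos i a) 0 = φ i a) →
      ∃ (Q : List (SLPOp ι)) (W : List ℝ),
        Q.length ≤ (3 * 2 ^ (k + 1) + 3) * m + 1 ∧ W.length = Q.length ∧ 1 ≤ Q.length ∧
        runOn f Q acc₀ = W ++ acc₀ ∧ W.getD 0 0 = Zn S φ := by
  intro m
  induction m with
  | zero =>
    intro S hS φ T pos acc₀ _ _ _ _ _
    rw [Finset.card_eq_zero] at hS
    subst hS
    exact ⟨[SLPOp.one], [1], by simp, rfl, by simp, rfl, by simp [Zn_empty]⟩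
  | succ m ih =>
    intro S hS φ T pos acc₀ hloc hT hcard hmem hpos
    have hSne : S.Nonempty := Finset.card_pos.1 (by omega)
    obtain ⟨u, hu, huniq⟩ := exists_leaf G hG S hSne
    by_cases hnb : ∃ t ∈ S, G.Adj u t
    · -- `u` has a (unique) live neighbour `t`
      obtain ⟨t, htS, hadj⟩ := hnb
      have hut : u ≠ t := G.ne_of_adj hadj
      have hS' : (S.erase u).card = m := by
        rw [Finset.card_erase_of_mem hu, hS]
        omega
      have hTu : ∀ j ∈ T u, j = u ∨ j = t := by
        intro j hj
        rcases hT u hu j hj with hji | ⟨hjS, hadj'⟩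
        · exact Or.inl hji
        · exact Or.inr (huniq j hjS t htS hadj' hadj)
      have hju : ∀ i ∈ S, i ≠ u → i ≠ t → ∀ j ∈ T i, j ≠ u := by
        intro i hi hiu hit j hj hje
        rcases hT i hi j hj with hji | ⟨hjS, hadj'⟩
        · exact hiu (hje ▸ hji).symm
        · subst hje
          exact hit (huniq i hi t htS (G.adj_symm hadj') hadj)
      have Hi : ∀ i ∈ S, i ≠ u → i ≠ t → ∀ (a : Fin n → Bool) (c : Bool),
          φ i (Function.update a u c) = φ i a := by
        intro i hi hiu hit a c
        refine hloc i hi _ _ (fun j hj => ?_)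
        rw [Function.update_of_ne (hju i hi hiu hit j hj)]
      set ψ : (Fin n → Bool) → ℝ := fun a =>
        φ u (Function.update a u true) * φ t (Function.update a u true) +
        φ u (Function.update a u false) * φ t (Function.update a u false) with hψ
      set Tt : Finset (Fin n) := insert t ((T t).erase u) with hTt
      have htTt : t ∈ Tt := Finset.mem_insert_self t _
      have hTtcard : Tt.card ≤ k + 1 := by
        have htmem : t ∈ (T t).erase u := Finset.mem_erase.2 ⟨Ne.symm hut, hmem t htS⟩
        rw [hTt, Finset.insert_eq_self.2 htmem]
        exact le_trans Finset.card_erase_le (hcard t htS)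
      have hψloc : ∀ a b : Fin n → Bool, (∀ j ∈ Tt, a j = b j) → ψ a = ψ b := by
        intro a b hab
        have hupd : ∀ (c : Bool), ∀ j ∈ T u,
            Function.update a u c j = Function.update b u c j := by
          intro c j hj
          rcases hTu j hj with rfl | rfl
          · simp
          · rw [Function.update_of_ne (Ne.symm hut), Function.update_of_ne (Ne.symm hut)]
            exact hab j htTt
        have hupd' : ∀ (c : Bool), ∀ j ∈ T t,
            Function.update a u c j = Function.update b u c j := by
          intro c j hj
          by_cases hjc : j = u
          · subst hjc; simp
          · rw [Function.update_of_ne hjc, Function.update_of_ne hjc]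
            exact hab j (Finset.mem_insert_of_mem (Finset.mem_erase.2 ⟨hjc, hj⟩))
        simp only [hψ]
        rw [hloc u hu _ _ (hupd true), hloc t htS _ _ (hupd' true),
          hloc u hu _ _ (hupd false), hloc t htS _ _ (hupd' false)]
      set A : Finset (Fin n → Bool) := asgn Tt with hA
      set l : List ((ℕ → List (SLPOp ι)) × ℝ) := A.toList.map (fun a =>
        (fun off => [SLPOp.add 0 1,
          SLPOp.mul (pos u (Function.update a u true) + off + 1)
                    (pos t (Function.update a u true) + off + 1),
          SLPOp.mul (pos u (Function.update a u false) + off)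
                    (pos t (Function.update a u false) + off)], ψ a)) with hl
      have hblock : ∀ p ∈ l, ∀ (off : ℕ) (W : List ℝ), W.length = off →
          (p.1 off).length = 3 ∧
          ∃ w₁ w₂, runOn f (p.1 off) (W ++ acc₀) = p.2 :: w₂ :: w₁ :: (W ++ acc₀) := by
        intro p hp off W hW
        rw [hl] at hp
        rw [List.mem_map] at hp
        obtain ⟨a, haA, rfl⟩ := hp
        subst hW
        refine ⟨rfl, φ u (Function.update a u false) * φ t (Function.update a u false),
          φ u (Function.update a u true) * φ t (Function.update a u true), ?_⟩
        simp only [runOn_cons, runOn_nil]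
        have e1 : evalOp f (SLPOp.mul (pos u (Function.update a u false) + W.length)
            (pos t (Function.update a u false) + W.length)) (W ++ acc₀)
            = φ u (Function.update a u false) * φ t (Function.update a u false) := by
          simp only [evalOp]
          rw [getD_shift _ _ _ _ rfl, getD_shift _ _ _ _ rfl, hpos u hu, hpos t htS]
        rw [e1]
        have e2 : evalOp f (SLPOp.mul (pos u (Function.update a u true) + W.length + 1)
            (pos t (Function.update a u true) + W.length + 1))
            ((φ u (Function.update a u false) * φ t (Function.update a u false)) :: (W ++ acc₀))
            = φ u (Function.update a u true) * φ t (Function.update a u true) := by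
          simp only [evalOp, List.getD_cons_succ]
          rw [getD_shift _ _ _ _ rfl, getD_shift _ _ _ _ rfl, hpos u hu, hpos t htS]
        rw [e2]
        have e3 : evalOp f (SLPOp.add 0 1)
            ((φ u (Function.update a u true) * φ t (Function.update a u true)) ::
             (φ u (Function.update a u false) * φ t (Function.update a u false)) ::
             (W ++ acc₀)) = ψ a := by
          simp only [evalOp, List.getD_cons_zero, List.getD_cons_succ, hψ]
        rw [e3]
      obtain ⟨QB, WB, hQBlen, hWBlen, hrunB, hvalB⟩ := buildTable f acc₀ l hblock
      have hAcard : A.card ≤ 2 ^ (k + 1) := card_asgn_le _ hTtcard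
      have hlA : l.length = A.card := by rw [hl, List.length_map, Finset.length_toList]
      have hWQB : WB.length = QB.length := by rw [hWBlen, hQBlen]
      set φ' : Fin n → (Fin n → Bool) → ℝ := Function.update φ t ψ with hφ'
      set T'' : Fin n → Finset (Fin n) := Function.update T t Tt with hT''
      set pos₁ : Fin n → (Fin n → Bool) → ℕ := fun i a =>
        if i = t then 3 * (A.toList.idxOf (mask Tt a)) else pos i a + QB.length with hpos₁
      have hpos₁spec : ∀ i ∈ S.erase u, ∀ a, (WB ++ acc₀).getD (pos₁ i a) 0 = φ' i a := by
        intro i hi a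
        by_cases hit : i = t
        · subst hit
          have hmaskmem : mask Tt a ∈ A.toList := by
            rw [Finset.mem_toList]; exact mask_mem_asgn _ _
          have hidx : A.toList.idxOf (mask Tt a) < A.toList.length :=
            List.idxOf_lt_length_iff.2 hmaskmem
          have hidx' : A.toList.idxOf (mask Tt a) < l.length := by
            rw [hl, List.length_map]; exact hidx
          have h3 : 3 * (A.toList.idxOf (mask Tt a)) < WB.length := by
            rw [hWBlen]; omega
          simp only [hpos₁, if_pos rfl]
          rw [List.getD_append _ _ _ _ h3]
          refine (hvalB _ hidx').trans ?_
          have hget : (l.get ⟨A.toList.idxOf (mask Tt a), hidx'⟩).2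
              = ψ (A.toList[A.toList.idxOf (mask Tt a)]'hidx) := by
            simp only [hl, List.get_eq_getElem, List.getElem_map]
          rw [hget, List.getElem_idxOf hidx, hφ', Function.update_self]
          exact hψloc _ _ (mask_agree Tt a)
        · simp only [hpos₁, if_neg hit]
          rw [getD_shift _ _ _ _ hWQB, hpos i (Finset.mem_of_mem_erase hi), hφ',
            Function.update_of_ne hit]
      have hloc' : ∀ i ∈ S.erase u, ∀ a b, (∀ j ∈ T'' i, a j = b j) → φ' i a = φ' i b := by
        intro i hi a b hab
        by_cases hit : i = t
        · subst hit
          rw [hφ', Function.update_self]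
          refine hψloc a b (fun j hj => hab j ?_)
          rw [hT'', Function.update_self]
          exact hj
        · rw [hφ', Function.update_of_ne hit]
          refine hloc i (Finset.mem_of_mem_erase hi) a b (fun j hj => hab j ?_)
          rw [hT'', Function.update_of_ne hit]
          exact hj
      have hT2 : ∀ i ∈ S.erase u, ∀ j ∈ T'' i, j = i ∨ (j ∈ S.erase u ∧ G.Adj i j) := by
        intro i hi j hj
        by_cases hit : i = t
        · subst hit
          rw [hT'', Function.update_self, hTt] at hj
          rcases Finset.mem_insert.1 hj with rfl | hj'
          · exact Or.inl rfl
          · have hjne := (Finset.mem_erase.1 hj').1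
            rcases hT i htS j (Finset.mem_erase.1 hj').2 with hji | ⟨hjS, hadj'⟩
            · exact Or.inl hji
            · exact Or.inr ⟨Finset.mem_erase.2 ⟨hjne, hjS⟩, hadj'⟩
        · rw [hT'', Function.update_of_ne hit] at hj
          rcases hT i (Finset.mem_of_mem_erase hi) j hj with hji | ⟨hjS, hadj'⟩
          · exact Or.inl hji
          · have hjne : j ≠ u := by
              intro hje
              subst hje
              exact hit (huniq i (Finset.mem_of_mem_erase hi) t htS (G.adj_symm hadj') hadj)
            exact Or.inr ⟨Finset.mem_erase.2 ⟨hjne, hjS⟩, hadj'⟩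
      have hcard' : ∀ i ∈ S.erase u, (T'' i).card ≤ k + 1 := by
        intro i hi
        by_cases hit : i = t
        · subst hit; rw [hT'', Function.update_self]; exact hTtcard
        · rw [hT'', Function.update_of_ne hit]
          exact hcard i (Finset.mem_of_mem_erase hi)
      have hmem' : ∀ i ∈ S.erase u, i ∈ T'' i := by
        intro i hi
        by_cases hit : i = t
        · subst hit; rw [hT'', Function.update_self]; exact htTt
        · rw [hT'', Function.update_of_ne hit]
          exact hmem i (Finset.mem_of_mem_erase hi)
      obtain ⟨Q₁, W₁, hQ₁len, hW₁len, hQ₁ne, hrun₁, hval₁⟩ :=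
        ih (S.erase u) hS' φ' T'' pos₁ (WB ++ acc₀) hloc' hT2 hcard' hmem' hpos₁spec
      have hW₁pos : 0 < W₁.length := by omega
      refine ⟨Q₁ ++ QB, W₁ ++ WB, ?_, ?_, ?_, ?_, ?_⟩
      · rw [List.length_append]
        have hQB3 : QB.length ≤ 3 * 2 ^ (k + 1) := by
          rw [hQBlen, hlA]
          omega
        calc Q₁.length + QB.length
            ≤ ((3 * 2 ^ (k + 1) + 3) * m + 1) + 3 * 2 ^ (k + 1) := add_le_add hQ₁len hQB3
          _ ≤ (3 * 2 ^ (k + 1) + 3) * (m + 1) + 1 := by ring_nf; omega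
      · rw [List.length_append, List.length_append, hW₁len, hWQB]
      · rw [List.length_append]; omega
      · rw [runOn_append, hrunB, hrun₁, List.append_assoc]
      · rw [List.getD_append _ _ _ _ hW₁pos, hval₁]
        exact (elim_leaf S u t hu htS hut φ Hi).symm
    · -- `u` has no live neighbour
      push_neg at hnb
      have hS' : (S.erase u).card = m := by
        rw [Finset.card_erase_of_mem hu, hS]
        omega
      have hju : ∀ i ∈ S, i ≠ u → ∀ j ∈ T i, j ≠ u := by
        intro i hi hiu j hj hjeq
        rcases hT i hi j hj with hji | ⟨hjS, hadj⟩
        · exact hiu (hjeq ▸ hji).symm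
        · subst hjeq; exact hnb i hi (G.adj_symm hadj)
      have Hi : ∀ i ∈ S, i ≠ u → ∀ (a : Fin n → Bool) (c : Bool),
          φ i (Function.update a u c) = φ i a := by
        intro i hi hiu a c
        refine hloc i hi _ _ (fun j hj => ?_)
        rw [Function.update_of_ne (hju i hi hiu j hj)]
      have Hu : ∀ a b : Fin n → Bool, a u = b u → φ u a = φ u b := by
        intro a b hab
        refine hloc u hu a b (fun j hj => ?_)
        rcases hT u hu j hj with rfl | ⟨hjS, hadj⟩
        · exact hab
        · exact absurd hadj (hnb j hjS)
      obtain ⟨Q₁, W₁, hQ₁len, hW₁len, hQ₁ne, hrun₁, hval₁⟩ :=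
        ih (S.erase u) hS' φ T pos acc₀
          (fun i hi => hloc i (Finset.mem_of_mem_erase hi))
          (fun i hi j hj => by
            rcases hT i (Finset.mem_of_mem_erase hi) j hj with h | ⟨hjS, hadj⟩
            · exact Or.inl h
            · exact Or.inr ⟨Finset.mem_erase.2
                ⟨hju i (Finset.mem_of_mem_erase hi) (Finset.mem_erase.1 hi).1 j hj, hjS⟩, hadj⟩)
          (fun i hi => hcard i (Finset.mem_of_mem_erase hi))
          (fun i hi => hmem i (Finset.mem_of_mem_erase hi))
          (fun i hi => hpos i (Finset.mem_of_mem_erase hi))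
      have hW₁pos : 0 < W₁.length := by omega
      have hshift : ∀ p, (W₁ ++ acc₀).getD (p + Q₁.length) 0 = acc₀.getD p 0 :=
        fun p => getD_shift _ _ _ _ hW₁len
      have hhead : (W₁ ++ acc₀).getD 0 0 = Zn (S.erase u) φ := by
        rw [List.getD_append _ _ _ _ hW₁pos, hval₁]
      set aT : Fin n → Bool := Function.update (fun _ => false) u true with haT
      set aF : Fin n → Bool := (fun _ => false) with haF
      set s : ℝ := φ u aT + φ u aF with hs
      refine ⟨SLPOp.mul 0 1 :: SLPOp.add (pos u aT + Q₁.length) (pos u aF + Q₁.length) :: Q₁,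
        (s * Zn (S.erase u) φ) :: s :: W₁, ?_, by simp [hW₁len], by simp, ?_, ?_⟩
      · simp only [List.length_cons]
        have h2 : 1 ≤ 2 ^ (k + 1) := Nat.one_le_two_pow
        nlinarith [hQ₁len]
      · rw [runOn_cons, runOn_cons, hrun₁]
        have hadd : evalOp f (SLPOp.add (pos u aT + Q₁.length) (pos u aF + Q₁.length))
            (W₁ ++ acc₀) = s := by
          simp only [evalOp]
          rw [hshift, hshift, hpos u hu, hpos u hu]
        rw [hadd]
        have hmul : evalOp f (SLPOp.mul 0 1) (s :: (W₁ ++ acc₀)) = s * Zn (S.erase u) φ := by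
          simp only [evalOp, List.getD_cons_zero, List.getD_cons_succ]
          rw [hhead]
        rw [hmul]
        simp
      · simp only [List.getD_cons_zero]
        exact (elim_isolated S u hu φ Hu Hi).symm


end Elim

section Master

variable {n k : ℕ}

open Classical in
noncomputable def initφ (B : BayesNet n) (e : Fin n → Option Bool) (i : Fin n)
    (a : Fin n → Bool) : ℝ :=
  if (∀ b ∈ e i, a i = b) then (if a i then B.cpt i a else 1 - B.cpt i a) else 0

open Classical in
noncomputable def mkInit (B : BayesNet n) (e : Fin n → Option Bool) (i : Fin n)
    (a : Fin n → Bool) : List (SLPOp (Fin n × (Fin n → Bool))) :=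
  if (∀ b ∈ e i, a i = b) then
    (if a i then [SLPOp.input (i, a), SLPOp.zero, SLPOp.zero]
     else [SLPOp.sub 0 1, SLPOp.one, SLPOp.input (i, a)])
  else [SLPOp.zero, SLPOp.zero, SLPOp.zero]

lemma mkInit_spec (B : BayesNet n) (e : Fin n → Option Bool) (i : Fin n) (a : Fin n → Bool)
    (acc : List ℝ) :
    (mkInit B e i a).length = 3 ∧
    ∃ w₁ w₂, runOn (fun p => B.cpt p.1 p.2) (mkInit B e i a) acc
      = initφ B e i a :: w₂ :: w₁ :: acc := by
  classical
  by_cases h1 : (∀ b ∈ e i, a i = b)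
  · by_cases h2 : a i
    · have hm : mkInit B e i a = [SLPOp.input (i, a), SLPOp.zero, SLPOp.zero] := by
        unfold mkInit; rw [if_pos h1, if_pos h2]
      have hφ : initφ B e i a = B.cpt i a := by
        unfold initφ; rw [if_pos h1, if_pos h2]
      exact ⟨by rw [hm]; rfl, 0, 0,
        by rw [hm, hφ]; simp [runOn_cons, evalOp]⟩
    · have hm : mkInit B e i a = [SLPOp.sub 0 1, SLPOp.one, SLPOp.input (i, a)] := by
        unfold mkInit; rw [if_pos h1, if_neg h2]
      have hφ : initφ B e i a = 1 - B.cpt i a := by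
        unfold initφ; rw [if_pos h1, if_neg h2]
      exact ⟨by rw [hm]; rfl, B.cpt i a, 1,
        by rw [hm, hφ]; simp [runOn_cons, evalOp]⟩
  · have hm : mkInit B e i a = [SLPOp.zero, SLPOp.zero, SLPOp.zero] := by
      unfold mkInit; rw [if_neg h1]
    have hφ : initφ B e i a = 0 := by
      unfold initφ; rw [if_neg h1]
    exact ⟨by rw [hm]; rfl, 0, 0,
      by rw [hm, hφ]; simp [runOn_cons, evalOp]⟩

lemma init_loc (B : BayesNet n) (e : Fin n → Option Bool) (i : Fin n) (a b : Fin n → Bool)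
    (hab : ∀ j ∈ insert i (B.parents i), a j = b j) : initφ B e i a = initφ B e i b := by
  have hii : a i = b i := hab i (Finset.mem_insert_self i _)
  have hcpt : B.cpt i a = B.cpt i b :=
    B.cpt_local i a b (fun j hj => hab j (Finset.mem_insert_of_mem hj))
  simp only [initφ, hii, hcpt]

lemma build_init (B : BayesNet n) (e : Fin n → Option Bool)
    (hk : ∀ i, (B.parents i).card ≤ k) (acc₀ : List ℝ) :
    ∀ L : List (Fin n), ∃ (P : List (SLPOp (Fin n × (Fin n → Bool)))) (W : List ℝ)
      (pos : Fin n → (Fin n → Bool) → ℕ),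
      P.length ≤ 3 * 2 ^ (k + 1) * L.length ∧ W.length = P.length ∧
      runOn (fun p => B.cpt p.1 p.2) P acc₀ = W ++ acc₀ ∧
      ∀ i ∈ L, ∀ a, (W ++ acc₀).getD (pos i a) 0 = initφ B e i a := by
  intro L
  induction L with
  | nil => exact ⟨[], [], fun _ _ => 0, by simp, rfl, rfl, by simp⟩
  | cons i rest ih =>
    obtain ⟨P, W, pos, hPlen, hWlen, hrun, hval⟩ := ih
    set T₀ : Finset (Fin n) := insert i (B.parents i) with hT₀
    set A : Finset (Fin n → Bool) := asgn T₀ with hA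
    set l : List ((ℕ → List (SLPOp (Fin n × (Fin n → Bool)))) × ℝ) :=
      A.toList.map (fun a => ((fun _ => mkInit B e i a), initφ B e i a)) with hl
    have hblock : ∀ p ∈ l, ∀ (off : ℕ) (W' : List ℝ), W'.length = off →
        (p.1 off).length = 3 ∧
        ∃ w₁ w₂, runOn (fun p => B.cpt p.1 p.2) (p.1 off) (W' ++ (W ++ acc₀))
          = p.2 :: w₂ :: w₁ :: (W' ++ (W ++ acc₀)) := by
      intro p hp off W' _
      rw [hl, List.mem_map] at hp
      obtain ⟨a, haA, rfl⟩ := hp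
      exact mkInit_spec B e i a _
    obtain ⟨QB, WB, hQBlen, hWBlen, hrunB, hvalB⟩ :=
      buildTable (fun p => B.cpt p.1 p.2) (W ++ acc₀) l hblock
    have hT₀card : T₀.card ≤ k + 1 :=
      le_trans (Finset.card_insert_le _ _) (Nat.succ_le_succ (hk i))
    have hAcard : A.card ≤ 2 ^ (k + 1) := card_asgn_le _ hT₀card
    have hlA : l.length = A.card := by rw [hl, List.length_map, Finset.length_toList]
    have hWQB : WB.length = QB.length := by rw [hWBlen, hQBlen]
    set pos' : Fin n → (Fin n → Bool) → ℕ := fun j a =>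
      if j = i then 3 * (A.toList.idxOf (mask T₀ a)) else pos j a + QB.length with hpos'
    refine ⟨QB ++ P, WB ++ W, pos', ?_, ?_, ?_, ?_⟩
    · rw [List.length_append, List.length_cons]
      have h1 : QB.length ≤ 3 * 2 ^ (k + 1) := by rw [hQBlen, hlA]; omega
      calc QB.length + P.length ≤ 3 * 2 ^ (k + 1) + 3 * 2 ^ (k + 1) * rest.length :=
            add_le_add h1 hPlen
        _ = 3 * 2 ^ (k + 1) * (rest.length + 1) := by ring
    · rw [List.length_append, List.length_append, hWlen, hWQB]
    · rw [runOn_append, hrun, hrunB, List.append_assoc]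
    · intro j hj a
      rw [List.append_assoc]
      rcases List.mem_cons.1 hj with rfl | hjrest
      · simp only [hpos', if_pos rfl]
        have hmaskmem : mask T₀ a ∈ A.toList := by
          rw [Finset.mem_toList]; exact mask_mem_asgn _ _
        have hidx : A.toList.idxOf (mask T₀ a) < A.toList.length :=
          List.idxOf_lt_length_iff.2 hmaskmem
        have hidx' : A.toList.idxOf (mask T₀ a) < l.length := by
          rw [hl, List.length_map]; exact hidx
        have h3 : 3 * (A.toList.idxOf (mask T₀ a)) < WB.length := by
          rw [hWBlen]; omega
        rw [List.getD_append _ _ _ _ h3]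
        refine (hvalB _ hidx').trans ?_
        have hget : (l.get ⟨A.toList.idxOf (mask T₀ a), hidx'⟩).2
            = initφ B e j (A.toList[A.toList.idxOf (mask T₀ a)]'hidx) := by
          simp only [hl, List.get_eq_getElem, List.getElem_map]
        rw [hget, List.getElem_idxOf hidx]
        exact init_loc B e j _ _ (mask_agree T₀ a)
      · by_cases hji : j = i
        · subst hji
          simp only [hpos', if_pos rfl]
          have hmaskmem : mask T₀ a ∈ A.toList := by
            rw [Finset.mem_toList]; exact mask_mem_asgn _ _
          have hidx : A.toList.idxOf (mask T₀ a) < A.toList.length :=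
            List.idxOf_lt_length_iff.2 hmaskmem
          have hidx' : A.toList.idxOf (mask T₀ a) < l.length := by
            rw [hl, List.length_map]; exact hidx
          have h3 : 3 * (A.toList.idxOf (mask T₀ a)) < WB.length := by
            rw [hWBlen]; omega
          rw [List.getD_append _ _ _ _ h3]
          refine (hvalB _ hidx').trans ?_
          have hget : (l.get ⟨A.toList.idxOf (mask T₀ a), hidx'⟩).2
              = initφ B e j (A.toList[A.toList.idxOf (mask T₀ a)]'hidx) := by
            simp only [hl, List.get_eq_getElem, List.getElem_map]
          rw [hget, List.getElem_idxOf hidx]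
          exact init_loc B e j _ _ (mask_agree T₀ a)
        · simp only [hpos', if_neg hji]
          rw [getD_shift _ _ _ _ hWQB]
          exact hval j hjrest a


open Classical in
lemma Zn_univ_init (B : BayesNet n) (e : Fin n → Option Bool) :
    Zn Finset.univ (initφ B e)
      = ∑ a : Fin n → Bool, if BayesNet.Consistent e a then B.joint a else 0 := by
  classical
  rw [Zn]
  have hcard : (Finset.univ : Finset (Fin n)).card = n := by simp
  rw [hcard, Nat.sub_self, pow_zero, div_one]
  refine Finset.sum_congr rfl (fun a _ => ?_)
  have hfac : ∀ i : Fin n, initφ B e i a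
      = (if (∀ b ∈ e i, a i = b) then (1:ℝ) else 0) *
        (if a i then B.cpt i a else 1 - B.cpt i a) := by
    intro i
    unfold initφ
    by_cases h : (∀ b ∈ e i, a i = b)
    · rw [if_pos h, if_pos h, one_mul]
    · rw [if_neg h, if_neg h, zero_mul]
  rw [Finset.prod_congr rfl (fun i _ => hfac i), Finset.prod_mul_distrib,
    Finset.prod_boole]
  have hiff : (∀ i ∈ Finset.univ, ∀ b ∈ e i, a i = b) ↔ BayesNet.Consistent e a := by
    simp [BayesNet.Consistent]
  by_cases hC : BayesNet.Consistent e a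
  · rw [if_pos (hiff.2 hC), if_pos hC, one_mul, BayesNet.joint]
  · rw [if_neg (fun h => hC (hiff.1 h)), if_neg hC, zero_mul]

open Classical in
lemma master (B : BayesNet n) (hpoly : B.IsPolytree) (hk : ∀ i, (B.parents i).card ≤ k)
    (e : Fin n → Option Bool) (acc₀ : List ℝ) :
    ∃ (P : List (SLPOp (Fin n × (Fin n → Bool)))) (W : List ℝ),
      P.length ≤ (6 * 2 ^ (k + 1) + 3) * n + 1 ∧ W.length = P.length ∧ 0 < W.length ∧
      runOn (fun p => B.cpt p.1 p.2) P acc₀ = W ++ acc₀ ∧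
      W.getD 0 0 = ∑ a : Fin n → Bool, if BayesNet.Consistent e a then B.joint a else 0 := by
  classical
  obtain ⟨P₀, W₀, pos, hP₀len, hW₀len, hrun₀, hval₀⟩ :=
    build_init B e hk acc₀ (Finset.univ : Finset (Fin n)).toList
  have hLlen : (Finset.univ : Finset (Fin n)).toList.length = n := by
    rw [Finset.length_toList]; simp
  obtain ⟨Q₁, W₁, hQ₁len, hW₁len, hQ₁ne, hrun₁, hval₁⟩ :=
    main_elim (k := k) (fun p : Fin n × (Fin n → Bool) => B.cpt p.1 p.2) B.uadj hpoly
      n Finset.univ (by simp)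
      (initφ B e) (fun i => insert i (B.parents i)) pos (W₀ ++ acc₀)
      (fun i _ => init_loc B e i)
      (fun i _ j hj => by
        rcases Finset.mem_insert.1 hj with rfl | hj'
        · exact Or.inl rfl
        · refine Or.inr ⟨Finset.mem_univ _, ?_⟩
          rw [BayesNet.uadj, SimpleGraph.fromRel_adj]
          exact ⟨(B.parents_lt i j hj').ne', Or.inl hj'⟩)
      (fun i _ => le_trans (Finset.card_insert_le _ _) (Nat.succ_le_succ (hk i)))
      (fun i _ => Finset.mem_insert_self _ _)
      (fun i _ a => hval₀ i (by simp [Finset.mem_toList]) a)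
  refine ⟨Q₁ ++ P₀, W₁ ++ W₀, ?_, ?_, ?_, ?_, ?_⟩
  · rw [List.length_append]
    have h1 : Q₁.length ≤ (3 * 2 ^ (k + 1) + 3) * n + 1 := hQ₁len
    have h2 : P₀.length ≤ 3 * 2 ^ (k + 1) * n := by rw [hLlen] at hP₀len; exact hP₀len
    have := add_le_add h1 h2
    calc Q₁.length + P₀.length ≤ ((3 * 2 ^ (k + 1) + 3) * n + 1) + 3 * 2 ^ (k + 1) * n := this
      _ = (6 * 2 ^ (k + 1) + 3) * n + 1 := by ring
  · rw [List.length_append, List.length_append, hW₁len, hW₀len]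
  · rw [List.length_append]; omega
  · rw [runOn_append, hrun₀, hrun₁, List.append_assoc]
  · have h01 : 0 < W₁.length := by omega
    rw [List.getD_append _ _ _ _ h01, hval₁, Zn_univ_init]

open Classical in
lemma num_shift (B : BayesNet n) (e : Fin n → Option Bool) (X : Fin n) (x : Bool)
    (h : e X = none ∨ e X = some x) :
    (∑ a : Fin n → Bool,
        if BayesNet.Consistent (fun i => if i = X then some x else e i) a then B.joint a else 0)
      = ∑ a : Fin n → Bool, if BayesNet.Consistent e a ∧ a X = x then B.joint a else 0 := by
  refine Finset.sum_congr rfl (fun a _ => ?_)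
  refine if_congr ?_ rfl rfl
  constructor
  · intro hc
    have hx : a X = x := hc X x (by simp)
    refine ⟨fun i b hb => ?_, hx⟩
    rcases eq_or_ne i X with rfl | hne
    · rcases h with h | h
      · rw [h] at hb; simp at hb
      · rw [h] at hb
        exact hx.trans (Option.mem_some_iff.1 hb)
    · exact hc i b (by simpa [hne] using hb)
  · rintro ⟨hc, hx⟩ i b hb
    rcases eq_or_ne i X with rfl | hne
    · have hbx : x = b := by simpa using hb
      rw [← hbx]
      exact hx
    · exact hc i b (by simpa [hne] using hb)

open Classical in
lemma num_zero (B : BayesNet n) (e : Fin n → Option Bool) (X : Fin n) (x : Bool)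
    (h : ¬(e X = none ∨ e X = some x)) :
    (∑ a : Fin n → Bool, if BayesNet.Consistent e a ∧ a X = x then B.joint a else 0) = 0 := by
  push_neg at h
  refine Finset.sum_eq_zero (fun a _ => ?_)
  rw [if_neg]
  rintro ⟨hcons, hx⟩
  obtain ⟨c, hc⟩ := Option.ne_none_iff_exists'.1 h.1
  have hac : a X = c := hcons X c (by rw [hc]; rfl)
  exact h.2 (by rw [hc, ← hac, hx])

end Master

end PolyInfer

/-- In a Bayesian network whose DAG is a polytree with `n` binary nodes, each node having at
most `k` parents, any conditional probability `P(X = x | E)` can be computed exactly in time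
polynomial in `n` (for fixed `k`): there is a straight-line arithmetic program over the entries
of the conditional probability tables, of length polynomial in `n`, computing the answer. -/
theorem polytree_inference_polynomial (k : ℕ) :
    ∃ C d : ℕ, ∀ (n : ℕ) (B : BayesNet n), B.IsPolytree → (∀ i, (B.parents i).card ≤ k) →
      ∀ (X : Fin n) (x : Bool) (e : Fin n → Option Bool),
        ∃ prog : List (SLPOp (Fin n × (Fin n → Bool))),
          prog.length ≤ C * (n + 1) ^ d ∧
          (runSLP (fun p => B.cpt p.1 p.2) prog).headI = B.condProb X x e := by
  classical
  refine ⟨12 * 2 ^ (k + 1) + 9, 1, ?_⟩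
  intro n B hpoly hk X x e
  have h2 : 1 ≤ 2 ^ (k + 1) := Nat.one_le_two_pow
  set f : Fin n × (Fin n → Bool) → ℝ := fun p => B.cpt p.1 p.2 with hf
  obtain ⟨Pden, Wden, hd1, hd2, hd3, hd4, hd5⟩ := PolyInfer.master B hpoly hk e []
  have hdpos : 0 < Wden.length := hd3
  by_cases hc : e X = none ∨ e X = some x
  · obtain ⟨Pnum, Wnum, hn1, hn2, hn3, hn4, hn5⟩ :=
      PolyInfer.master B hpoly hk (fun i => if i = X then some x else e i)
        (PolyInfer.runOn f Pden [])
    refine ⟨SLPOp.div 0 Pnum.length :: (Pnum ++ Pden), ?_, ?_⟩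
    · simp only [List.length_cons, List.length_append, pow_one]
      nlinarith [hn1, hd1]
    · have hprev : PolyInfer.runOn f (Pnum ++ Pden) []
          = Wnum ++ PolyInfer.runOn f Pden [] := by
        rw [PolyInfer.runOn_append, hn4]
      have hnumv : (Wnum ++ PolyInfer.runOn f Pden []).getD 0 0
          = ∑ a : Fin n → Bool, if BayesNet.Consistent e a ∧ a X = x then B.joint a else 0 := by
        rw [List.getD_append _ _ _ _ hn3, hn5]
        exact PolyInfer.num_shift B e X x hc
      have hdenv : (Wnum ++ PolyInfer.runOn f Pden []).getD Pnum.length 0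
          = ∑ a : Fin n → Bool, if BayesNet.Consistent e a then B.joint a else 0 := by
        rw [List.getD_append_right _ _ _ _ (le_of_eq hn2), hn2, Nat.sub_self, hd4]
        rw [List.getD_append _ _ _ _ hdpos]
        exact hd5
      rw [PolyInfer.runSLP_eq_runOn, PolyInfer.runOn_cons]
      show PolyInfer.evalOp f (SLPOp.div 0 Pnum.length)
        (PolyInfer.runOn f (Pnum ++ Pden) []) = B.condProb X x e
      rw [PolyInfer.evalOp, hprev, hnumv, hdenv, BayesNet.condProb]
  · refine ⟨SLPOp.div 0 1 :: SLPOp.zero :: Pden, ?_, ?_⟩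
    · simp only [List.length_cons, pow_one]
      nlinarith [hd1]
    · have hdenv : ((0:ℝ) :: (Wden ++ [])).getD 1 0
          = ∑ a : Fin n → Bool, if BayesNet.Consistent e a then B.joint a else 0 := by
        rw [List.getD_cons_succ, List.getD_append _ _ _ _ hdpos]
        exact hd5
      rw [PolyInfer.runSLP_eq_runOn, PolyInfer.runOn_cons, PolyInfer.runOn_cons, hd4]
      show PolyInfer.evalOp f (SLPOp.div 0 1)
        (PolyInfer.evalOp f SLPOp.zero (Wden ++ []) :: (Wden ++ [])) = B.condProb X x e
      have hz : PolyInfer.evalOp f SLPOp.zero (Wden ++ []) = 0 := rfl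
      rw [hz, PolyInfer.evalOp, hdenv, BayesNet.condProb,
        PolyInfer.num_zero B e X x hc]
      simp
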